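/- Let (P, ≼, ∧, ∨) be a locally finite lattice with least element 0̂, let f be a semimultiplicative complex-valued function on P with f(x) ≠ 0 for all x ∈ P, and let S = {x_1, …, x_n} be a finite lower closed subset of P with distinct elements, indexed so that x_i ≼ x_j only if i ≤ j. Assume d_i = ∑_{z ≼ x_i, z ⋠ x_j for all j < i} (f_d * μ)(0̂, z) ≠ 0 for all i. Then every (S)_f-eigenvalue λ ∈ ℂ of [S]_f satisfies |λ| ≤ C_f · m_f⁻¹ · F_{n+1} (F_{n+3} − 2), where C_f = max_{1≤i,j≤n} |f(x_i ∨ x_j)|, m_f = min_{1≤i≤n} |d_i|, and (F_k) is the Fibonacci sequence with F_1 = F_2 = 1 and F_{k+2} = F_k + F_{k+1}. -/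

import Mathlib

/-!
Let `E` be the zeta matrix of `S` (`E i k = 1` iff `x k ≤ x i`) and `M` the matrix of the Möbius
values `μ(x j, x i)`. Because `S` is lower closed, `E * M = 1`, each `d i` reduces to
`(f_d * μ)(0̂, x i)`, and Möbius inversion factors the meet matrix as `E * diag d * Eᵀ`. So
`w = Eᵀ v ≠ 0` solves `(M [S]_f Mᵀ) w = λ diag d w`; reading this at a coordinate where `‖w‖` is
maximal bounds `|λ| |d i|` by `C_f` times the absolute row sum of row `i` of `M` times the total
absolute sum of `M`.

The row of `M` with index `i` (counted from `0`) is a row of the inverse of a unitriangular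
`0`-`1` matrix, so each entry is minus a `0`-`1` combination of the entries to its right. Hence
the positive part of a new entry is at most the negative mass already present and vice versa, and
the positive and negative masses grow like Fibonacci numbers: the absolute row sum is at most
`F (i + 2) ≤ F (n + 1)`, and summing over the rows gives `F (n + 3) - 2`.
-/

open Matrix Finset

theorem Nat.sum_range_fib_add_two (n : ℕ) :
    ∑ k ∈ range n, Nat.fib (k + 2) + 2 = Nat.fib (n + 3) := by
  rw [Nat.fib_succ_eq_succ_sum (n + 2), sum_range_succ', sum_range_succ']
  simp [add_assoc]

theorem sum_posPart_negPart_le_fib {α : Type*} [LinearOrder α] {e : α → α → ℝ}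
    (he : ∀ k j, e k j = 0 ∨ e k j = 1) (he_diag : ∀ j, e j j = 1)
    (he_tri : ∀ k j, k < j → e k j = 0) {b : α → ℝ} {i : α} (s : Finset α)
    (hs : ∀ j ∈ s, j ≤ i) (hb : ∀ j ∈ s, ∑ k ∈ s, b k * e k j = if j = i then 1 else 0) :
    ∑ j ∈ s, (b j)⁺ ≤ Nat.fib #s ∧ ∑ j ∈ s, (b j)⁻ ≤ Nat.fib #s ∧
      ∑ j ∈ s, (b j)⁺ + ∑ j ∈ s, (b j)⁻ ≤ Nat.fib (#s + 1) := by
  induction s using Finset.induction_on_min with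
  | empty => simp
  | insert a t hat ih =>
    have ha : a ∉ t := fun h => lt_irrefl a (hat a h)
    have hrow : b a + ∑ k ∈ t, b k * e k a = if a = i then 1 else 0 := by
      simpa [sum_insert ha, he_diag] using hb a (mem_insert_self a t)
    by_cases hai : a = i
    · obtain rfl : t = ∅ := eq_empty_of_forall_notMem fun k hk =>
        (hat k hk).not_ge (hai ▸ hs k (mem_insert_of_mem hk))
      simp_all
    obtain ⟨hP, hN, hPN⟩ := ih (fun j hj => hs j (mem_insert_of_mem hj)) fun j hj => by
      simpa [sum_insert ha, he_tri a j (hat j hj)] using hb j (mem_insert_of_mem hj)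
    have hba : b a = -∑ k ∈ t, b k * e k a := by simp only [hai, if_false] at hrow; linarith
    have hup : b a ≤ ∑ k ∈ t, (b k)⁻ := by
      rw [hba, ← sum_neg_distrib]
      exact sum_le_sum fun k _ => by rcases he k a with h | h <;> simp [h, neg_le_negPart]
    have hdown : -b a ≤ ∑ k ∈ t, (b k)⁺ := by
      rw [hba, neg_neg]
      exact sum_le_sum fun k _ => by rcases he k a with h | h <;> simp [h, le_posPart]
    have hpos : (b a)⁺ ≤ ∑ k ∈ t, (b k)⁻ :=
      sup_le hup (sum_nonneg fun k _ => negPart_nonneg _)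
    have hneg : (b a)⁻ ≤ ∑ k ∈ t, (b k)⁺ :=
      sup_le hdown (sum_nonneg fun k _ => posPart_nonneg _)
    have hfib : (Nat.fib #t : ℝ) ≤ Nat.fib (#t + 1) := by exact_mod_cast Nat.fib_le_fib_succ
    have hfib2 : (Nat.fib (#t + 2) : ℝ) = Nat.fib #t + Nat.fib (#t + 1) := by
      exact_mod_cast Nat.fib_add_two
    rw [sum_insert ha, sum_insert ha, card_insert_of_notMem ha]
    rcases le_total 0 (b a) with h | h
    · have : (b a)⁻ = 0 := negPart_eq_zero.mpr h
      refine ⟨?_, ?_, ?_⟩ <;> linarith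
    · have : (b a)⁺ = 0 := posPart_eq_zero.mpr h
      refine ⟨?_, ?_, ?_⟩ <;> linarith

theorem sum_norm_le_fib_of_mul_eq_one {n : ℕ} {M E : Matrix (Fin n) (Fin n) ℂ}
    (hE : ∀ k j, E k j = 0 ∨ E k j = 1) (hE_diag : ∀ j, E j j = 1)
    (hE_tri : ∀ k j, k < j → E k j = 0) (hM_tri : ∀ i k, i < k → M i k = 0)
    (hME : M * E = 1) (i : Fin n) :
    ∑ j, ‖M i j‖ ≤ Nat.fib (i + 2) := by
  have hE_im : ∀ k j, (E k j).im = 0 := fun k j => by rcases hE k j with h | h <;> simp [h]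
  -- `M` is real: its conjugate is also a left inverse of the real matrix `E`.
  have hM_real : M.map (starRingEnd ℂ) = M := by
    have hE_conj : E.map (starRingEnd ℂ) = E := by
      ext k j; exact Complex.conj_eq_iff_im.mpr (hE_im k j)
    calc M.map (starRingEnd ℂ) = M.map (starRingEnd ℂ) * (E * M) := by
          rw [mul_eq_one_comm.mp hME, Matrix.mul_one]
      _ = (M * E).map (starRingEnd ℂ) * M := by rw [Matrix.map_mul, hE_conj, Matrix.mul_assoc]
      _ = M := by simp [hME]
  have hM_im : ∀ j, (M i j).im = 0 := fun j =>
    Complex.conj_eq_iff_im.mp (congrFun (congrFun hM_real i) j)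
  have hb : ∀ j ∈ Iic i, ∑ k ∈ Iic i, (M i k).re * (E k j).re = if j = i then 1 else 0 := by
    intro j _
    have hsupp : ∑ k ∈ Iic i, M i k * E k j = (M * E) i j :=
      sum_subset (subset_univ _) fun k _ hk => by
        rw [hM_tri i k (not_le.mp (by simpa using hk)), zero_mul]
    have := congrArg Complex.re hsupp
    simp only [Complex.re_sum, Complex.mul_re, hE_im, mul_zero, sub_zero, hME] at this
    rw [this]
    obtain rfl | hji := eq_or_ne j i <;> simp [*, one_apply_ne']
  obtain ⟨-, -, hPN⟩ := sum_posPart_negPart_le_fib (e := fun k j => (E k j).re)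
    (fun k j => by rcases hE k j with h | h <;> simp [h]) (fun j => by simp [hE_diag])
    (fun k j hkj => by simp [hE_tri k j hkj]) (Iic i) (fun j => mem_Iic.mp) hb
  calc ∑ j, ‖M i j‖ = ∑ j ∈ Iic i, |(M i j).re| := by
        rw [← sum_subset (subset_univ (Iic i)) fun k _ hk => by
          rw [hM_tri i k (not_le.mp (by simpa using hk)), norm_zero]]
        exact sum_congr rfl fun j _ => (Complex.abs_re_eq_norm.mpr (hM_im j)).symm
    _ = ∑ j ∈ Iic i, ((M i j).re)⁺ + ∑ j ∈ Iic i, ((M i j).re)⁻ := by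
        rw [← sum_add_distrib]; simp only [posPart_add_negPart]
    _ ≤ Nat.fib (i + 2) := by simpa [Fin.card_Iic] using hPN

section Mobius

variable {P R : Type*} [PartialOrder P] [LocallyFiniteOrder P] [Ring R] {mu : P → P → R}

theorem sum_Icc_mu [DecidableEq P] (hmu_self : ∀ p, mu p p = 1)
    (hmu_lt : ∀ p q : P, p < q → mu p q = -∑ r ∈ Ico p q, mu p r) (p q : P) :
    ∑ z ∈ Icc p q, mu p z = if p = q then 1 else 0 := by
  rcases eq_or_ne p q with rfl | hne
  · simp [hmu_self]
  by_cases hpq : p ≤ q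
  · rw [Icc_eq_cons_Ico hpq, sum_cons, hmu_lt p q (hpq.lt_of_ne hne), if_neg hne, neg_add_cancel]
  · rw [Icc_eq_empty hpq, sum_empty, if_neg hne]

variable [OrderBot P]

theorem sum_Icc_bot_mu [DecidableEq P] (hmu_self : ∀ p, mu p p = 1)
    (hmu_lt : ∀ p q : P, p < q → mu p q = -∑ r ∈ Ico p q, mu p r)
    (hmu_nle : ∀ p q : P, ¬ p ≤ q → mu p q = 0) (p q : P) :
    ∑ z ∈ Icc ⊥ q, mu p z = if p = q then 1 else 0 := by
  rw [← sum_Icc_mu hmu_self hmu_lt]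
  refine (sum_subset (Icc_subset_Icc_left bot_le) fun z hz hz' => ?_).symm
  exact hmu_nle p z fun hpz => hz' (mem_Icc.mpr ⟨hpz, (mem_Icc.mp hz).2⟩)

theorem sum_Icc_bot_sum_mul_mu [DecidableEq P] (hmu_self : ∀ p, mu p p = 1)
    (hmu_lt : ∀ p q : P, p < q → mu p q = -∑ r ∈ Ico p q, mu p r) (f : P → R) (y : P) :
    ∑ z ∈ Icc ⊥ y, ∑ w ∈ Icc ⊥ z, f w * mu w z = f y := by
  rw [sum_comm' (t' := Icc ⊥ y) (s' := fun w => Icc w y) (by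
    intro z w
    simp only [mem_Icc, bot_le, true_and]
    exact ⟨fun h => ⟨⟨h.2, h.1⟩, h.2.trans h.1⟩, fun h => ⟨h.1.2, h.1.1⟩⟩)]
  simp_rw [← mul_sum, sum_Icc_mu hmu_self hmu_lt, mul_ite, mul_one, mul_zero]
  simp

end Mobius

theorem injective_of_le_imp_le {ι P : Type*} [PartialOrder ι] [Preorder P]
    {x : ι → P} (hord : ∀ i j, x i ≤ x j → i ≤ j) : Function.Injective x :=
  fun i j h => le_antisymm (hord i j h.le) (hord j i h.ge)

def zetaMatrix (R : Type*) [Zero R] [One R] {P : Type*} [LE P]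
    [DecidableRel ((· ≤ ·) : P → P → Prop)] {n : ℕ} (x : Fin n → P) :
    Matrix (Fin n) (Fin n) R :=
  of fun i j => if x j ≤ x i then 1 else 0

def mobiusMatrix {R P : Type*} {n : ℕ} (mu : P → P → R) (x : Fin n → P) :
    Matrix (Fin n) (Fin n) R :=
  of fun i j => mu (x j) (x i)

section LowerClosedFamily

variable {P R : Type*} [PartialOrder P] [OrderBot P] [LocallyFiniteOrder P]
  [DecidableRel ((· ≤ ·) : P → P → Prop)] [Ring R] {n : ℕ} {x : Fin n → P}

theorem sum_Icc_bot_eq_sum_filter {M : Type*} [AddCommMonoid M]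
    (hord : ∀ i j, x i ≤ x j → i ≤ j) (hlower : ∀ i (z : P), z ≤ x i → ∃ k, x k = z)
    (g : P → M) {m : P} {i : Fin n} (hm : m ≤ x i) :
    ∑ z ∈ Icc ⊥ m, g z = ∑ k with x k ≤ m, g (x k) := by
  classical
  have himage : (univ.filter (x · ≤ m)).image x = Icc ⊥ m := by
    ext z
    simp only [mem_image, mem_filter, mem_univ, true_and, mem_Icc, bot_le]
    refine ⟨fun ⟨k, hk, hkz⟩ => hkz ▸ hk, fun hz => ?_⟩
    obtain ⟨k, rfl⟩ := hlower i z (hz.trans hm)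
    exact ⟨k, hz, rfl⟩
  rw [← himage, sum_image (injective_of_le_imp_le hord).injOn]

theorem filter_Icc_bot_not_le_earlier (hord : ∀ i j, x i ≤ x j → i ≤ j)
    (hlower : ∀ i (z : P), z ≤ x i → ∃ k, x k = z) (i : Fin n) :
    (Icc ⊥ (x i)).filter (fun z => ∀ j, j < i → ¬ z ≤ x j) = {x i} := by
  ext z
  simp only [mem_filter, mem_Icc, bot_le, true_and, mem_singleton]
  constructor
  · rintro ⟨hz, hnew⟩
    obtain ⟨k, rfl⟩ := hlower i z hz
    obtain hki | rfl := (hord k i hz).lt_or_eq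
    · exact absurd le_rfl (hnew k hki)
    · rfl
  · rintro rfl
    exact ⟨le_rfl, fun j hji hij => (hord i j hij).not_gt hji⟩

theorem zetaMatrix_mul_mobiusMatrix {mu : P → P → R} (hmu_self : ∀ p, mu p p = 1)
    (hmu_lt : ∀ p q : P, p < q → mu p q = -∑ r ∈ Ico p q, mu p r)
    (hmu_nle : ∀ p q : P, ¬ p ≤ q → mu p q = 0)
    (hord : ∀ i j, x i ≤ x j → i ≤ j) (hlower : ∀ i (z : P), z ≤ x i → ∃ k, x k = z) :
    zetaMatrix R x * mobiusMatrix mu x = 1 := by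
  classical
  ext i j
  simp only [mul_apply, zetaMatrix, mobiusMatrix, of_apply, ite_mul, one_mul, zero_mul,
    ← sum_filter]
  rw [← sum_Icc_bot_eq_sum_filter hord hlower (mu (x j)) le_rfl,
    sum_Icc_bot_mu hmu_self hmu_lt hmu_nle, one_apply, (injective_of_le_imp_le hord).eq_iff]
  obtain rfl | hij := eq_or_ne i j
  · simp
  · simp [hij, hij.symm]

theorem sum_norm_mobiusMatrix_le_fib {mu : P → P → ℂ} (hmu_self : ∀ p, mu p p = 1)
    (hmu_lt : ∀ p q : P, p < q → mu p q = -∑ r ∈ Ico p q, mu p r)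
    (hmu_nle : ∀ p q : P, ¬ p ≤ q → mu p q = 0)
    (hord : ∀ i j, x i ≤ x j → i ≤ j) (hlower : ∀ i (z : P), z ≤ x i → ∃ k, x k = z)
    (i : Fin n) :
    ∑ j, ‖mobiusMatrix mu x i j‖ ≤ Nat.fib (i + 2) :=
  sum_norm_le_fib_of_mul_eq_one (E := zetaMatrix ℂ x)
    (fun k j => by simp only [zetaMatrix, of_apply]; split_ifs <;> simp)
    (fun j => by simp [zetaMatrix])
    (fun k j hkj => if_neg fun h => (hord j k h).not_gt hkj)
    (fun i k hik => hmu_nle _ _ fun h => (hord k i h).not_gt hik)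
    (mul_eq_one_comm.mp (zetaMatrix_mul_mobiusMatrix hmu_self hmu_lt hmu_nle hord hlower)) i

end LowerClosedFamily

theorem meetMatrix_eq_zetaMatrix_mul_diagonal_mul_transpose {P R : Type*} [Lattice P]
    [OrderBot P] [LocallyFiniteOrder P] [DecidableRel ((· ≤ ·) : P → P → Prop)] [Ring R] {n : ℕ}
    {x : Fin n → P} {mu : P → P → R} (hmu_self : ∀ p, mu p p = 1)
    (hmu_lt : ∀ p q : P, p < q → mu p q = -∑ r ∈ Ico p q, mu p r)
    (hord : ∀ i j, x i ≤ x j → i ≤ j) (hlower : ∀ i (z : P), z ≤ x i → ∃ k, x k = z)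
    (f : P → R) :
    of (fun i j => f (x i ⊓ x j)) = zetaMatrix R x *
      diagonal (fun k => ∑ w ∈ Icc ⊥ (x k), f w * mu w (x k)) * (zetaMatrix R x)ᵀ := by
  classical
  ext i j
  rw [mul_apply]
  simp only [mul_diagonal, transpose_apply, zetaMatrix, of_apply, ite_mul, one_mul,
    zero_mul, mul_ite, mul_one, mul_zero, ← ite_and, ← le_inf_iff, ← sum_filter]
  rw [← sum_Icc_bot_eq_sum_filter hord hlower (fun z => ∑ w ∈ Icc ⊥ z, f w * mu w z)
    (inf_le_left : x j ⊓ x i ≤ x j), sum_Icc_bot_sum_mul_mu hmu_self hmu_lt, inf_comm]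

theorem mulVec_mul_mul_transpose_eq_smul_diagonal {ι R : Type*} [Fintype ι] [DecidableEq ι]
    [CommRing R]
    {E M J A : Matrix ι ι R} {d v : ι → R} {lam : R} (hEM : E * M = 1)
    (hA : A = E * diagonal d * Eᵀ) (h : J *ᵥ v = lam • A *ᵥ v) :
    (M * J * Mᵀ) *ᵥ (Eᵀ *ᵥ v) = lam • diagonal d *ᵥ (Eᵀ *ᵥ v) := by
  have hME : M * E = 1 := mul_eq_one_comm.mp hEM
  calc (M * J * Mᵀ) *ᵥ (Eᵀ *ᵥ v) = M *ᵥ (J *ᵥ ((E * M)ᵀ *ᵥ v)) := by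
        simp only [mulVec_mulVec, transpose_mul, Matrix.mul_assoc]
    _ = M *ᵥ (lam • A *ᵥ v) := by rw [hEM, transpose_one, one_mulVec, h]
    _ = lam • diagonal d *ᵥ (Eᵀ *ᵥ v) := by
        rw [mulVec_smul, hA, mulVec_mulVec, mulVec_mulVec, ← Matrix.mul_assoc,
          ← Matrix.mul_assoc, hME, Matrix.one_mul]

theorem exists_norm_mul_norm_le_sum_norm {ι 𝕜 : Type*} [Fintype ι] [DecidableEq ι]
    [NormedField 𝕜] {B : Matrix ι ι 𝕜} {d w : ι → 𝕜} {lam : 𝕜} (hw : w ≠ 0)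
    (h : B *ᵥ w = lam • diagonal d *ᵥ w) :
    ∃ i, ‖lam‖ * ‖d i‖ ≤ ∑ j, ‖B i j‖ := by
  obtain ⟨k, hk⟩ := Function.ne_iff.mp hw
  have : Nonempty ι := ⟨k⟩
  obtain ⟨i, hi⟩ := Finite.exists_max (‖w ·‖)
  have hwi : 0 < ‖w i‖ := (norm_pos_iff.mpr hk).trans_le (hi k)
  refine ⟨i, le_of_mul_le_mul_right ?_ hwi⟩
  calc ‖lam‖ * ‖d i‖ * ‖w i‖ = ‖(B *ᵥ w) i‖ := by
        rw [h, Pi.smul_apply, mulVec_diagonal, smul_eq_mul, norm_mul, norm_mul, mul_assoc]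
    _ ≤ ∑ j, ‖B i j‖ * ‖w j‖ :=
        (norm_sum_le _ _).trans_eq (sum_congr rfl fun j _ => norm_mul _ _)
    _ ≤ (∑ j, ‖B i j‖) * ‖w i‖ := by
        rw [sum_mul]
        exact sum_le_sum fun j _ => mul_le_mul_of_nonneg_left (hi j) (norm_nonneg _)

theorem norm_mul_mul_transpose_apply_le {ι 𝕜 : Type*} [Fintype ι] [NormedRing 𝕜]
    {M J : Matrix ι ι 𝕜} {C : ℝ} (hJ : ∀ k l, ‖J k l‖ ≤ C) (i j : ι) :
    ‖(M * J * Mᵀ) i j‖ ≤ C * (∑ k, ‖M i k‖) * ∑ l, ‖M j l‖ := by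
  simp only [mul_apply, transpose_apply]
  calc ‖∑ l, (∑ k, M i k * J k l) * M j l‖ ≤ ∑ l, ∑ k, ‖M i k‖ * ‖J k l‖ * ‖M j l‖ := by
        refine (norm_sum_le _ _).trans (sum_le_sum fun l _ => ?_)
        rw [sum_mul]
        refine (norm_sum_le _ _).trans (sum_le_sum fun k _ => ?_)
        exact (norm_mul_le _ _).trans
          (mul_le_mul_of_nonneg_right (norm_mul_le _ _) (norm_nonneg _))
    _ ≤ ∑ l, ∑ k, ‖M i k‖ * C * ‖M j l‖ := by gcongr with l _ k _; exact hJ k l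
    _ = C * (∑ k, ‖M i k‖) * ∑ l, ‖M j l‖ := by
        rw [mul_assoc, sum_mul_sum, mul_sum, sum_comm]
        exact sum_congr rfl fun k _ => by rw [mul_sum]; exact sum_congr rfl fun l _ => by ring

theorem norm_eigenvalue_le_of_mul_mul_transpose {ι : Type*} [Fintype ι] [DecidableEq ι]
    {M J : Matrix ι ι ℂ} {d w : ι → ℂ} {lam : ℂ} {C K L : ℝ} (hw : w ≠ 0)
    (h : (M * J * Mᵀ) *ᵥ w = lam • diagonal d *ᵥ w) (hd : ∀ i, d i ≠ 0)
    (hJ : ∀ k l, ‖J k l‖ ≤ C) (hrow : ∀ i, ∑ j, ‖M i j‖ ≤ K)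
    (hsum : ∑ i, ∑ j, ‖M i j‖ ≤ L) :
    ‖lam‖ ≤ C * (⨅ i, ‖d i‖)⁻¹ * (K * L) := by
  obtain ⟨i, hi⟩ := exists_norm_mul_norm_le_sum_norm hw h
  have hC : 0 ≤ C := (norm_nonneg _).trans (hJ i i)
  have hbound : ‖lam‖ * ‖d i‖ ≤ C * (K * L) := calc
    _ ≤ ∑ j, C * (∑ k, ‖M i k‖) * ∑ l, ‖M j l‖ :=
        hi.trans (sum_le_sum fun j _ => norm_mul_mul_transpose_apply_le hJ i j)
    _ = C * ((∑ k, ‖M i k‖) * ∑ j, ∑ l, ‖M j l‖) := by rw [← mul_sum, mul_assoc]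
    _ ≤ C * (K * L) := by
        have hK : 0 ≤ K := (sum_nonneg fun k _ => norm_nonneg _).trans (hrow i)
        have hS : 0 ≤ ∑ j, ∑ l, ‖M j l‖ :=
          sum_nonneg fun j _ => sum_nonneg fun l _ => norm_nonneg _
        exact mul_le_mul_of_nonneg_left (mul_le_mul (hrow i) hsum hS hK) hC
  have : Nonempty ι := ⟨i⟩
  obtain ⟨k, hk⟩ := exists_eq_ciInf_of_finite (f := fun i => ‖d i‖)
  have hm_pos : 0 < ⨅ i, ‖d i‖ := hk ▸ norm_pos_iff.mpr (hd k)
  have hm_le : ⨅ i, ‖d i‖ ≤ ‖d i‖ := ciInf_le (Finite.bddBelow_range _) i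
  rw [mul_right_comm, le_mul_inv_iff₀ hm_pos]
  exact (mul_le_mul_of_nonneg_left hm_le (norm_nonneg _)).trans hbound

theorem local_upper_bound_join_wrt_meet_general
    {P : Type*} [Lattice P] [OrderBot P] [LocallyFiniteOrder P]
    [DecidableRel ((· ≤ ·) : P → P → Prop)]
    (mu : P → P → ℂ)
    (hmu_self : ∀ p, mu p p = 1)
    (hmu_lt : ∀ p q : P, p < q → mu p q = -∑ r ∈ Finset.Ico p q, mu p r)
    (hmu_nle : ∀ p q : P, ¬ p ≤ q → mu p q = 0)
    (f : P → ℂ)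
    {n : ℕ}
    (x : Fin n → P)
    (hord : ∀ i j, x i ≤ x j → i ≤ j)
    (hlower : ∀ i (z : P), z ≤ x i → ∃ k, x k = z)
    (d : Fin n → ℂ)
    (hd : ∀ i, d i = ∑ z ∈ (Finset.Icc ⊥ (x i)).filter
        (fun z => ∀ j, j < i → ¬ z ≤ x j),
      ∑ w ∈ Finset.Icc ⊥ z, f w * mu w z)
    (hd0 : ∀ i, d i ≠ 0)
    (lam : ℂ) (v : Fin n → ℂ) (hv : v ≠ 0)
    (heig : (Matrix.of fun i j => f (x i ⊔ x j)).mulVec v =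
      lam • (Matrix.of fun i j => f (x i ⊓ x j)).mulVec v) :
    ‖lam‖ ≤
      (⨆ p : Fin n × Fin n, ‖f (x p.1 ⊔ x p.2)‖) *
        (⨅ i, ‖d i‖)⁻¹ *
        ((Nat.fib (n + 1) : ℝ) * ((Nat.fib (n + 3) : ℝ) - 2)) := by
  have hEM := zetaMatrix_mul_mobiusMatrix hmu_self hmu_lt hmu_nle hord hlower
  have hA := meetMatrix_eq_zetaMatrix_mul_diagonal_mul_transpose hmu_self hmu_lt hord hlower f
  have hdiag : (fun k => ∑ w ∈ Icc ⊥ (x k), f w * mu w (x k)) = d := funext fun k => by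
    rw [hd, filter_Icc_bot_not_le_earlier hord hlower, sum_singleton]
  rw [hdiag] at hA
  have hw : (zetaMatrix ℂ x)ᵀ *ᵥ v ≠ 0 := fun h0 => hv <| by
    simpa [mulVec_mulVec, ← transpose_mul, hEM] using congrArg ((mobiusMatrix mu x)ᵀ *ᵥ ·) h0
  have hrow := sum_norm_mobiusMatrix_le_fib hmu_self hmu_lt hmu_nle hord hlower
  refine norm_eigenvalue_le_of_mul_mul_transpose hw
    (mulVec_mul_mul_transpose_eq_smul_diagonal hEM hA heig) hd0
    (fun k l => le_ciSup (f := fun p : Fin n × Fin n => ‖f (x p.1 ⊔ x p.2)‖)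
      (Finite.bddAbove_range _) (k, l))
    (fun i => (hrow i).trans (by exact_mod_cast Nat.fib_mono (by omega))) ?_
  calc ∑ i, ∑ j, ‖mobiusMatrix mu x i j‖ ≤ ∑ i : Fin n, (Nat.fib (i + 2) : ℝ) :=
        sum_le_sum fun i _ => hrow i
    _ = Nat.fib (n + 3) - 2 := by
        rw [Fin.sum_univ_eq_sum_range (fun i => (Nat.fib (i + 2) : ℝ)),
          ← Nat.sum_range_fib_add_two]
        push_cast; ring

/-- **local upper bound, dual problem.** For lower closed `S`, every
`(S)_f`-eigenvalue `λ` of `[S]_f` satisfies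
`|λ| ≤ C_f m_f⁻¹ F (n+1) (F (n+3) − 2)`, where `F` is the Fibonacci sequence with
`F 1 = F 2 = 1`, `C_f = max_{i,j} |f (x i ∨ x j)|` and `m_f = min_i |d i|`. -/
theorem local_upper_bound_join_wrt_meet
    {P : Type*} [Lattice P] [OrderBot P] [LocallyFiniteOrder P]
    [DecidableRel ((· ≤ ·) : P → P → Prop)]
    (mu : P → P → ℂ)
    (hmu_self : ∀ p, mu p p = 1)
    (hmu_lt : ∀ p q : P, p < q → mu p q = -∑ r ∈ Finset.Ico p q, mu p r)
    (hmu_nle : ∀ p q : P, ¬ p ≤ q → mu p q = 0)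
    (f : P → ℂ) (hf : ∀ p, f p ≠ 0)
    (hsemi : ∀ p q : P, f (p ⊓ q) * f (p ⊔ q) = f p * f q)
    {n : ℕ} (hn : 0 < n)
    (x : Fin n → P) (hinj : Function.Injective x)
    (hord : ∀ i j, x i ≤ x j → i ≤ j)
    (hlower : ∀ i (z : P), z ≤ x i → ∃ k, x k = z)
    (d : Fin n → ℂ)
    (hd : ∀ i, d i = ∑ z ∈ (Finset.Icc ⊥ (x i)).filter
        (fun z => ∀ j, j < i → ¬ z ≤ x j),
      ∑ w ∈ Finset.Icc ⊥ z, f w * mu w z)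
    (hd0 : ∀ i, d i ≠ 0)
    (lam : ℂ) (v : Fin n → ℂ) (hv : v ≠ 0)
    (heig : (Matrix.of fun i j => f (x i ⊔ x j)).mulVec v =
      lam • (Matrix.of fun i j => f (x i ⊓ x j)).mulVec v) :
    ‖lam‖ ≤
      (⨆ p : Fin n × Fin n, ‖f (x p.1 ⊔ x p.2)‖) *
        (⨅ i, ‖d i‖)⁻¹ *
        ((Nat.fib (n + 1) : ℝ) * ((Nat.fib (n + 3) : ℝ) - 2)) :=
  local_upper_bound_join_wrt_meet_general mu hmu_self hmu_lt hmu_nle f x hord hlower d hd hd0 lam v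
    hv heig
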